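/- Let L be a Lelek fan. The group H(L) of all homeomorphisms of L, with the compact-open topology, is totally disconnected: for any f ≠ g in H(L) there is a clopen subset of H(L) containing f but not g. -/

import Mathlib

/-- The equivalence relation on `(ℕ → Bool) × [0,1]` identifying two points iff they are
equal or both have second coordinate `0`. -/
def CantorFanSetoid : Setoid ((ℕ → Bool) × unitInterval) where
  r p q := p = q ∨ (p.2 = 0 ∧ q.2 = 0)
  iseqv := by
    constructor
    · intro p; exact Or.inl rfl
    · rintro p q (h | h)
      · exact Or.inl h.symm
      · exact Or.inr ⟨h.2, h.1⟩
    · rintro p q r (h | h) (h' | h')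
      · exact Or.inl (h.trans h')
      · exact Or.inr ⟨by rw [h]; exact h'.1, h'.2⟩
      · exact Or.inr ⟨h.1, by rw [← h']; exact h.2⟩
      · exact Or.inr ⟨h.1, h'.2⟩

/-- The Cantor fan: the cone over the Cantor set `{0,1}^ℕ`, i.e. the quotient of
`{0,1}^ℕ × [0,1]` collapsing `{0,1}^ℕ × {0}` to a point. -/
def CantorFan : Type := Quotient CantorFanSetoid

instance : TopologicalSpace CantorFan := instTopologicalSpaceQuotient

/-- The top `v` of the Cantor fan. -/
def fanTop : CantorFan := Quotient.mk CantorFanSetoid (fun _ => false, 0)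

/-- `e` is an endpoint of `X ⊆ CantorFan` if `e ∈ X` and for every arc contained in `X`
and containing `e`, the point `e` is an endpoint of that arc. -/
def IsEndpoint (X : Set CantorFan) (e : CantorFan) : Prop :=
  e ∈ X ∧ ∀ h : unitInterval → CantorFan, Topology.IsEmbedding h →
    Set.range h ⊆ X → e ∈ Set.range h → e = h 0 ∨ e = h 1

/-- A Lelek fan: a nondegenerate subcontinuum of the Cantor fan whose set of endpoints
is dense in it. -/
def IsLelekFan (L : Set CantorFan) : Prop :=
  L.Nontrivial ∧ IsCompact L ∧ IsConnected L ∧ L ⊆ closure {e | IsEndpoint L e}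

/-- The compact-open topology on the homeomorphism group, induced from the space of
continuous self-maps with the compact-open topology. -/
instance homeoCompactOpen (X : Type*) [TopologicalSpace X] : TopologicalSpace (X ≃ₜ X) :=
  TopologicalSpace.induced (fun h => (⟨⇑h, h.continuous⟩ : C(X, X)))
    ContinuousMap.compactOpen

/-!
Homeomorphisms of `L` map endpoints to endpoints, and endpoints are dense in `L`, so two distinct
homeomorphisms `f ≠ g` already differ at an endpoint `x`. A subcontinuum of the Cantor fan
containing the top `v` contains the segment from `v` to each of its points, and a Lelek fan
contains `v` and meets two legs; hence `v` and every point below another point of `L` on the same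
leg are interior points of arcs in `L`. So distinct endpoints lie on distinct legs, away from `v`:
a clopen set `K` of the Cantor set separates the legs of `f x` and `g x`, and the cone over `K`
minus `v`, being clopen in the fan minus `v`, pulls back along `h ↦ h x` to a clopen set of `H(L)`.
-/

open Set Function Topology unitInterval

namespace CantorFan

def mk (c : ℕ → Bool) (t : I) : CantorFan := Quotient.mk CantorFanSetoid (c, t)

theorem mk_eq_mk_iff {a b : ℕ → Bool} {s t : I} :
    mk a s = mk b t ↔ (a = b ∧ s = t) ∨ (s = 0 ∧ t = 0) :=
  Quotient.eq.trans (or_congr_left Prod.ext_iff)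

theorem exists_mk (z : CantorFan) : ∃ c t, mk c t = z :=
  let ⟨⟨c, t⟩, h⟩ := Quotient.exists_rep z; ⟨c, t, h⟩

theorem mk_zero (c : ℕ → Bool) : mk c 0 = fanTop := Quotient.sound (Or.inr ⟨rfl, rfl⟩)

theorem mk_eq_fanTop_iff {c : ℕ → Bool} {t : I} : mk c t = fanTop ↔ t = 0 := by
  rw [← mk_zero c, mk_eq_mk_iff]; tauto

theorem mk_right_injective (c : ℕ → Bool) : Injective (mk c) := fun s t h => by
  rcases mk_eq_mk_iff.mp h with h | h
  exacts [h.2, h.1.trans h.2.symm]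

theorem mk_eq_mk_of_pos {a b : ℕ → Bool} {s t : I} (hs : 0 < s) (h : mk a s = mk b t) :
    a = b ∧ s = t :=
  (mk_eq_mk_iff.mp h).resolve_right fun h' => hs.ne' h'.1

theorem isQuotientMap_mk : IsQuotientMap fun p : (ℕ → Bool) × I => mk p.1 p.2 :=
  isQuotientMap_quotient_mk'

theorem continuous_mk : Continuous fun p : (ℕ → Bool) × I => mk p.1 p.2 :=
  isQuotientMap_mk.continuous

instance : CompactSpace CantorFan :=
  Quotient.compactSpace

def height : CantorFan → I :=
  Quotient.lift Prod.snd <| by rintro p q (rfl | ⟨hp, hq⟩) <;> simp_all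

@[simp]
theorem height_mk (c : ℕ → Bool) (t : I) : height (mk c t) = t := rfl

theorem continuous_height : Continuous height :=
  continuous_quot_lift _ continuous_snd

def openCone (K : Set (ℕ → Bool)) (u : I) : Set CantorFan :=
  {z | ∃ c ∈ K, ∃ t, u < t ∧ mk c t = z}

theorem mk_mem_openCone {K : Set (ℕ → Bool)} {u : I} {c : ℕ → Bool} {t : I} :
    mk c t ∈ openCone K u ↔ c ∈ K ∧ u < t := by
  refine ⟨?_, fun ⟨hc, ht⟩ => ⟨c, hc, t, ht, rfl⟩⟩
  rintro ⟨c', hc', t', ht', h⟩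
  obtain ⟨rfl, rfl⟩ := mk_eq_mk_of_pos (nonneg'.trans_lt ht') h
  exact ⟨hc', ht'⟩

theorem isOpen_openCone {K : Set (ℕ → Bool)} (hK : IsOpen K) (u : I) :
    IsOpen (openCone K u) := by
  refine isQuotientMap_mk.isOpen_preimage.mp ?_
  have : (fun p : (ℕ → Bool) × I => mk p.1 p.2) ⁻¹' openCone K u = K ×ˢ Ioi u := by
    ext ⟨c, t⟩; exact mk_mem_openCone
  rw [this]
  exact hK.prod isOpen_Ioi

instance : T2Space CantorFan := by
  refine ⟨fun z w hzw => ?_⟩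
  obtain ⟨a, s, rfl⟩ := exists_mk z
  obtain ⟨b, t, rfl⟩ := exists_mk w
  by_cases hst : s = t
  · subst hst
    have hs : 0 < s := pos_iff_ne_zero.mpr fun h => hzw (by rw [h, mk_zero, mk_zero])
    have hab : a ≠ b := by rintro rfl; exact hzw rfl
    obtain ⟨K, hK, haK, hbK⟩ := exists_isClopen_of_totally_separated hab
    refine ⟨openCone K 0, openCone Kᶜ 0, isOpen_openCone hK.isOpen 0,
      isOpen_openCone hK.compl.isOpen 0, mk_mem_openCone.mpr ⟨haK, hs⟩,
      mk_mem_openCone.mpr ⟨hbK, hs⟩, disjoint_left.mpr ?_⟩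
    rintro _ ⟨c, hc, r, hr, rfl⟩ h
    exact (mk_mem_openCone.mp h).1 hc
  · exact separated_by_continuous continuous_height hst

theorem closure_openCone_subset {K : Set (ℕ → Bool)} (hK : IsClosed K) (u : I) :
    closure (openCone K u) ⊆ openCone K u ∪ (mk · u) '' K := by
  have hclosed : IsClosed ((fun p : (ℕ → Bool) × I => mk p.1 p.2) '' (K ×ˢ Ici u)) :=
    ((hK.prod isClosed_Ici).isCompact.image continuous_mk).isClosed
  refine (closure_minimal ?_ hclosed).trans ?_
  · rintro _ ⟨c, hc, t, ht, rfl⟩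
    exact ⟨(c, t), ⟨hc, ht.le⟩, rfl⟩
  · rintro _ ⟨⟨c, t⟩, ⟨hc, ht⟩, rfl⟩
    rcases (show u ≤ t from ht).eq_or_lt with rfl | ht
    exacts [Or.inr ⟨c, hc, rfl⟩, Or.inl ⟨c, hc, t, ht, rfl⟩]

theorem fanTop_notMem_openCone (K : Set (ℕ → Bool)) (u : I) : fanTop ∉ openCone K u := by
  rintro ⟨c, -, t, ht, h⟩
  exact (nonneg'.trans_lt ht).ne' (mk_eq_fanTop_iff.mp h)

theorem isClopen_preimage_openCone {Y : Type*} [TopologicalSpace Y] {φ : Y → CantorFan}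
    (hφ : Continuous φ) (hφtop : ∀ y, φ y ≠ fanTop) {K : Set (ℕ → Bool)} (hK : IsClopen K) :
    IsClopen (φ ⁻¹' openCone K 0) := by
  refine ⟨isClosed_of_closure_subset fun y hy => ?_, (isOpen_openCone hK.isOpen 0).preimage hφ⟩
  refine (closure_openCone_subset hK.isClosed 0 (hφ.closure_preimage_subset _ hy)).resolve_right ?_
  rintro ⟨c, -, hc⟩
  exact hφtop y (hc.symm.trans (mk_zero c))

theorem subset_openCone_of_isPreconnected {L : Set CantorFan} (hL : IsPreconnected L)
    {K : Set (ℕ → Bool)} (hK : IsClopen K) {u : I} (hLK : (L ∩ openCone K u).Nonempty)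
    (hu : ∀ c ∈ K, mk c u ∉ L) : L ⊆ openCone K u :=
  hL.subset_of_closure_inter_subset (isOpen_openCone hK.isOpen u) hLK fun _ ⟨hz, hzL⟩ =>
    (closure_openCone_subset hK.isClosed u hz).resolve_right fun ⟨c, hc, hcz⟩ =>
      hu c hc (by rwa [← hcz] at hzL)

theorem mk_mem_of_le {L : Set CantorFan} (hLc : IsClosed L) (hL : IsPreconnected L)
    (htop : fanTop ∈ L) {c : ℕ → Bool} {s u : I} (hs : mk c s ∈ L) (hus : u ≤ s) :
    mk c u ∈ L := by
  by_contra hu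
  -- otherwise the part of `L` above height `u` over a clopen `K ∋ c` would be clopen in `L`
  have hopen : IsOpen {c' | mk c' u ∉ L} :=
    hLc.isOpen_compl.preimage (continuous_mk.comp (Continuous.prodMk_left u))
  obtain ⟨K, hK, hcK, hKu⟩ := compact_exists_isClopen_in_isOpen hopen hu
  have hlt : u < s := hus.lt_of_ne (by rintro rfl; exact hu hs)
  exact fanTop_notMem_openCone K u <|
    subset_openCone_of_isPreconnected hL hK ⟨_, hs, mk_mem_openCone.mpr ⟨hcK, hlt⟩⟩ hKu htop

/-- The union of the legs `a` and `b`, parametrized by `[-1, 1]` with `v` at `0` and leg `a` on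
the negative side; an arc when `a ≠ b`. -/
noncomputable def twoLegs (a b : ℕ → Bool) (r : ℝ) : CantorFan :=
  if r ≤ 0 then mk a (projIcc 0 1 zero_le_one (-r)) else mk b (projIcc 0 1 zero_le_one r)

theorem continuous_twoLegs (a b : ℕ → Bool) : Continuous (twoLegs a b) := by
  have hproj := continuous_projIcc (a := (0 : ℝ)) (b := 1) (h := zero_le_one)
  refine Continuous.if_le ?_ ?_ continuous_id continuous_const fun r (hr : r = 0) => ?_
  · exact continuous_mk.comp (continuous_const.prodMk (hproj.comp continuous_neg))
  · exact continuous_mk.comp (continuous_const.prodMk hproj)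
  · simp only [hr, neg_zero, projIcc_left]
    exact (mk_zero a).trans (mk_zero b).symm

theorem twoLegs_of_nonneg (a b : ℕ → Bool) {r : ℝ} (h0 : 0 ≤ r) (h1 : r ≤ 1) :
    twoLegs a b r = mk b ⟨r, h0, h1⟩ := by
  unfold twoLegs
  split_ifs with hr
  · obtain rfl : r = 0 := le_antisymm hr h0
    simp only [neg_zero, projIcc_left]
    exact (mk_zero a).trans (mk_zero b).symm
  · rw [projIcc_of_mem _ ⟨h0, h1⟩]

theorem twoLegs_of_nonpos (a b : ℕ → Bool) {r : ℝ} (h0 : r ≤ 0) (h1 : -1 ≤ r) :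
    twoLegs a b r = mk a ⟨-r, neg_nonneg.mpr h0, neg_le.mp h1⟩ := by
  rw [twoLegs, if_pos h0, projIcc_of_mem _ ⟨neg_nonneg.mpr h0, neg_le.mp h1⟩]

theorem twoLegs_coe (a b : ℕ → Bool) (t : I) : twoLegs a b t = mk b t :=
  twoLegs_of_nonneg a b t.2.1 t.2.2

theorem twoLegs_zero (a b : ℕ → Bool) : twoLegs a b 0 = fanTop :=
  (twoLegs_coe a b 0).trans (mk_zero b)

theorem injOn_twoLegs {a b : ℕ → Bool} (hab : a ≠ b) : InjOn (twoLegs a b) (Icc (-1) 1) := by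
  intro r hr r' hr' h
  rcases le_or_gt r 0 with h0 | h0 <;> rcases le_or_gt r' 0 with h0' | h0'
  · rw [twoLegs_of_nonpos a b h0 hr.1, twoLegs_of_nonpos a b h0' hr'.1] at h
    simpa using congrArg Subtype.val (mk_right_injective a h)
  · rw [twoLegs_of_nonpos a b h0 hr.1, twoLegs_of_nonneg a b h0'.le hr'.2] at h
    rcases mk_eq_mk_iff.mp h with h | h
    · exact absurd h.1 hab
    · exact absurd (congrArg Subtype.val h.2) h0'.ne'
  · rw [twoLegs_of_nonneg a b h0.le hr.2, twoLegs_of_nonpos a b h0' hr'.1] at h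
    rcases mk_eq_mk_iff.mp h with h | h
    · exact absurd h.1 hab.symm
    · exact absurd (congrArg Subtype.val h.1) h0.ne'
  · rw [twoLegs_of_nonneg a b h0.le hr.2, twoLegs_of_nonneg a b h0'.le hr'.2] at h
    exact congrArg Subtype.val (mk_right_injective b h)

theorem not_isEndpoint_twoLegs {X : Set CantorFan} {a b : ℕ → Bool} (hab : a ≠ b) {p q r : ℝ}
    (hp : -1 ≤ p) (hpr : p < r) (hrq : r < q) (hq : q ≤ 1)
    (hX : ∀ r' ∈ Icc p q, twoLegs a b r' ∈ X) : ¬ IsEndpoint X (twoLegs a b r) := by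
  intro he
  have hpq : p < q := hpr.trans hrq
  have hinj : InjOn (twoLegs a b) (Icc p q) := (injOn_twoLegs hab).mono (Icc_subset_Icc hp hq)
  let φ : I → CantorFan := fun x => twoLegs a b ((iccHomeoI p q hpq).symm x)
  have hφ : IsEmbedding φ :=
    (((continuous_twoLegs a b).comp continuous_subtype_val).isClosedEmbedding
      hinj.injective).isEmbedding.comp (iccHomeoI p q hpq).symm.isEmbedding
  have hrange : range φ ⊆ X := by
    rintro _ ⟨x, rfl⟩
    exact hX _ ((iccHomeoI p q hpq).symm x).2
  have hr : twoLegs a b r ∈ range φ :=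
    ⟨iccHomeoI p q hpq ⟨r, hpr.le, hrq.le⟩, by simp only [φ, Homeomorph.symm_apply_apply]⟩
  rcases he.2 φ hφ hrange hr with h | h
  · exact hpr.ne' (hinj ⟨hpr.le, hrq.le⟩ (left_mem_Icc.mpr hpq.le) (by simpa [φ] using h))
  · exact hrq.ne (hinj ⟨hpr.le, hrq.le⟩ (right_mem_Icc.mpr hpq.le) (by simpa [φ] using h))

end CantorFan

theorem IsEndpoint.homeomorph {X Y : Set CantorFan} (f : X ≃ₜ Y) {x : X}
    (hx : IsEndpoint X x) : IsEndpoint Y (f x) := by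
  refine ⟨(f x).2, fun h hh hY hfx => ?_⟩
  have hhY : ∀ r, h r ∈ Y := fun r => hY (mem_range_self r)
  let h' : I → CantorFan := fun r => f.symm (codRestrict h Y hhY r)
  have hh' : IsEmbedding h' :=
    IsEmbedding.subtypeVal.comp (f.symm.isEmbedding.comp (hh.codRestrict _ _))
  have hx' : (x : CantorFan) ∈ range h' := by
    obtain ⟨r, hr⟩ := hfx
    exact ⟨r, by simp only [h', show codRestrict h Y hhY r = f x from Subtype.ext hr,
      Homeomorph.symm_apply_apply]⟩
  have hfx' : ∀ r, (x : CantorFan) = h' r → (f x : CantorFan) = h r := fun r hr => by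
    rw [Subtype.ext hr, Homeomorph.apply_symm_apply]; rfl
  exact (hx.2 h' hh' (range_subset_iff.mpr fun r => (f.symm _).2) hx').imp (hfx' 0) (hfx' 1)

theorem continuous_homeomorph_apply {X : Type*} [TopologicalSpace X] (x : X) :
    Continuous fun h : X ≃ₜ X => h x :=
  have : Continuous fun h : X ≃ₜ X => (⟨h, h.continuous⟩ : C(X, X)) := continuous_induced_dom
  (continuous_eval_const (F := C(X, X)) x).comp this

namespace IsLelekFan

open CantorFan

variable {L : Set CantorFan}

theorem dense_endpoints (hL : IsLelekFan L) : Dense {x : L | IsEndpoint L x} :=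
  Subtype.dense_iff.mpr <| hL.2.2.2.trans <| closure_mono fun e he => ⟨⟨e, he.1⟩, he, rfl⟩

theorem not_subset_range_mk (hL : IsLelekFan L) (a : ℕ → Bool) : ¬ L ⊆ range (mk a) := by
  intro hsub
  -- `L` would be a nondegenerate segment of the leg, whose interior points are not endpoints
  have hmem : ∀ t ∈ height '' L, mk a t ∈ L := by
    rintro _ ⟨z, hz, rfl⟩
    obtain ⟨t, rfl⟩ := hsub hz
    simpa using hz
  have hconn : IsPreconnected (height '' L) :=
    hL.2.2.1.isPreconnected.image _ continuous_height.continuousOn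
  obtain ⟨α, hα, β, hβ, hαβ⟩ : ∃ α ∈ height '' L, ∃ β ∈ height '' L, α < β := by
    obtain ⟨x, hx, y, hy, hxy⟩ := hL.1
    obtain ⟨s, rfl⟩ := hsub hx
    obtain ⟨t, rfl⟩ := hsub hy
    rcases lt_or_gt_of_ne fun h : s = t => hxy (by rw [h]) with h | h
    exacts [⟨s, ⟨_, hx, rfl⟩, t, ⟨_, hy, rfl⟩, h⟩, ⟨t, ⟨_, hy, rfl⟩, s, ⟨_, hx, rfl⟩, h⟩]
  obtain ⟨m, hαm, hmβ⟩ := exists_between hαβ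
  obtain ⟨e, he, heE⟩ :=
    mem_closure_iff.mp (hL.2.2.2 (hmem m (hconn.Icc_subset hα hβ ⟨hαm.le, hmβ.le⟩)))
      (height ⁻¹' Ioo α β) (isOpen_Ioo.preimage continuous_height) ⟨hαm, hmβ⟩
  obtain ⟨u, rfl⟩ := hsub heE.1
  obtain ⟨a', ha'⟩ := exists_ne a
  refine not_isEndpoint_twoLegs ha' (p := α) (q := β) (by linarith [α.2.1]) (he.1 : α < u)
    (he.2 : u < β) β.2.2 (fun r hr => ?_) (by rwa [twoLegs_coe])
  rw [twoLegs_of_nonneg a' a (α.2.1.trans hr.1) (hr.2.trans β.2.2)]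
  exact hmem _ (hconn.Icc_subset hα hβ ⟨hr.1, hr.2⟩)

theorem exists_mem_two_legs (hL : IsLelekFan L) : ∃ (a b : ℕ → Bool) (s t : I),
    a ≠ b ∧ 0 < s ∧ 0 < t ∧ mk a s ∈ L ∧ mk b t ∈ L := by
  obtain ⟨z, hz, hztop⟩ := hL.1.exists_ne fanTop
  obtain ⟨a, s, rfl⟩ := exists_mk z
  obtain ⟨w, hw, hwa⟩ := not_subset.mp (hL.not_subset_range_mk a)
  obtain ⟨b, t, rfl⟩ := exists_mk w
  refine ⟨a, b, s, t, ?_, pos_iff_ne_zero.mpr fun h => hztop (by rw [h, mk_zero]),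
    pos_iff_ne_zero.mpr fun h => hwa ⟨0, by rw [h, mk_zero, mk_zero]⟩, hz, hw⟩
  rintro rfl
  exact hwa ⟨t, rfl⟩

theorem fanTop_mem (hL : IsLelekFan L) : fanTop ∈ L := by
  by_contra htop
  obtain ⟨a, b, s, t, hab, hs, ht, ha, hb⟩ := hL.exists_mem_two_legs
  obtain ⟨K, hK, haK, hbK⟩ := exists_isClopen_of_totally_separated hab
  have hLK := subset_openCone_of_isPreconnected hL.2.2.1.isPreconnected hK
    ⟨_, ha, mk_mem_openCone.mpr ⟨haK, hs⟩⟩ fun c _ hc => htop (mk_zero c ▸ hc)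
  exact hbK (mk_mem_openCone.mp (hLK hb)).1

theorem mk_mem_of_le (hL : IsLelekFan L) {c : ℕ → Bool} {s u : I} (hs : mk c s ∈ L)
    (hus : u ≤ s) : mk c u ∈ L :=
  CantorFan.mk_mem_of_le hL.2.1.isClosed hL.2.2.1.isPreconnected hL.fanTop_mem hs hus

theorem not_isEndpoint_fanTop (hL : IsLelekFan L) : ¬ IsEndpoint L fanTop := by
  obtain ⟨a, b, s, t, hab, hs, ht, ha, hb⟩ := hL.exists_mem_two_legs
  rw [← twoLegs_zero a b]
  refine not_isEndpoint_twoLegs hab (p := -s) (q := t) (neg_le_neg s.2.2) (neg_neg_of_pos hs) ht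
    t.2.2 fun r hr => ?_
  rcases le_or_gt r 0 with h0 | h0
  · rw [twoLegs_of_nonpos a b h0 (le_trans (neg_le_neg s.2.2) hr.1)]
    exact hL.mk_mem_of_le ha (neg_le.mp hr.1 : _)
  · rw [twoLegs_of_nonneg a b h0.le (hr.2.trans t.2.2)]
    exact hL.mk_mem_of_le hb hr.2

theorem pos_of_isEndpoint (hL : IsLelekFan L) {c : ℕ → Bool} {s : I}
    (he : IsEndpoint L (mk c s)) : 0 < s :=
  pos_iff_ne_zero.mpr fun h => hL.not_isEndpoint_fanTop (by rwa [h, mk_zero] at he)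

theorem le_of_isEndpoint (hL : IsLelekFan L) {c : ℕ → Bool} {s t : I}
    (he : IsEndpoint L (mk c s)) (ht : mk c t ∈ L) : t ≤ s := by
  by_contra! hst
  obtain ⟨c', hc'⟩ := exists_ne c
  refine not_isEndpoint_twoLegs hc' (p := 0) (q := t) (by norm_num) (hL.pos_of_isEndpoint he)
    hst t.2.2 (fun r hr => ?_) (by rwa [twoLegs_coe])
  rw [twoLegs_of_nonneg c' c hr.1 (hr.2.trans t.2.2)]
  exact hL.mk_mem_of_le ht hr.2

theorem exists_isClopen_of_isEndpoint (hL : IsLelekFan L) {p q : CantorFan}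
    (hp : IsEndpoint L p) (hq : IsEndpoint L q) (hpq : p ≠ q) :
    ∃ K : Set (ℕ → Bool), IsClopen K ∧ p ∈ openCone K 0 ∧ q ∉ openCone K 0 := by
  obtain ⟨a, s, rfl⟩ := exists_mk p
  obtain ⟨b, t, rfl⟩ := exists_mk q
  have hab : a ≠ b := by
    rintro rfl
    exact hpq (by rw [le_antisymm (hL.le_of_isEndpoint hp hq.1) (hL.le_of_isEndpoint hq hp.1)])
  obtain ⟨K, hK, haK, hbK⟩ := exists_isClopen_of_totally_separated hab
  exact ⟨K, hK, mk_mem_openCone.mpr ⟨haK, hL.pos_of_isEndpoint hp⟩,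
    fun h => hbK (mk_mem_openCone.mp h).1⟩

end IsLelekFan

/-- The homeomorphism group of the Lelek fan, with the compact-open topology, is totally
disconnected: any two distinct homeomorphisms are separated by a clopen set. -/
theorem lelekFan_homeoGroup_totallyDisconnected (L : Set CantorFan) (hL : IsLelekFan L)
    (f g : ↥L ≃ₜ ↥L) (hfg : f ≠ g) :
    ∃ U : Set (↥L ≃ₜ ↥L), IsClopen U ∧ f ∈ U ∧ g ∉ U := by
  obtain ⟨x, hx, hfgx⟩ : ∃ x : L, IsEndpoint L x ∧ f x ≠ g x := by
    by_contra! h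
    exact hfg (Homeomorph.ext (congrFun
      (Continuous.ext_on hL.dense_endpoints f.continuous g.continuous h)))
  obtain ⟨K, hK, hfK, hgK⟩ := hL.exists_isClopen_of_isEndpoint (hx.homeomorph f)
    (hx.homeomorph g) (Subtype.coe_injective.ne hfgx)
  refine ⟨(fun h : L ≃ₜ L => (h x : CantorFan)) ⁻¹' CantorFan.openCone K 0,
    CantorFan.isClopen_preimage_openCone
      (continuous_subtype_val.comp (continuous_homeomorph_apply x))
      (fun h htop => hL.not_isEndpoint_fanTop (htop ▸ hx.homeomorph h)) hK, hfK, hgK⟩
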